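/- arXiv:2003.01597 — 3 statements merged into one kernel-verified Lean document; each statement's English description precedes it below -/
import Mathlib

section
/- Let Ω be a compact metric space with distance ρ, let F : [0,∞) → [0,∞) be continuous, and let 𝒱₀ be a 0-symmetric set of finite signed Borel measures ν on Ω with ν(Ω) = 0 such that μ̃ + 𝒱₀ ⊆ 𝒫(Ω) and μ̃ minimizes I_F over μ̃ + 𝒱₀. If a finite signed Borel measure ν is the weak-* limit of a sequence (λ_n ν_n) with λ_n ∈ ℝ and ν_n ∈ 𝒱₀, then ∬_Ω F(ρ(x,y)) dν(x) dν(y) ≥ 0. -/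
open MeasureTheory Topology Filter
open scoped ENNReal NNReal

/-- The support of a (nonnegative) Borel measure: points all of whose open
neighborhoods have positive measure. -/
def msupp {Ω : Type*} [TopologicalSpace Ω] {m : MeasurableSpace Ω}
    (μ : Measure Ω) : Set Ω :=
  {x | ∀ U : Set Ω, IsOpen U → x ∈ U → μ U ≠ 0}

/-- The interaction energy `I_F(μ) = ∬ F(ρ(x,y)) dμ(x) dμ(y)` of a measure
with respect to a kernel `F` and a distance function `ρ`. -/
noncomputable def energy {Ω : Type*} {m : MeasurableSpace Ω}
    (F : ℝ → ℝ) (ρ : Ω → Ω → ℝ) (μ : Measure Ω) : ℝ :=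
  ∫ x, ∫ y, F (ρ x y) ∂μ ∂μ

/-- The integral of a function against a finite signed measure, via the
Jordan decomposition. -/
noncomputable def sintegral {Ω : Type*} {m : MeasurableSpace Ω}
    (ν : SignedMeasure Ω) (f : Ω → ℝ) : ℝ :=
  ∫ x, f x ∂ν.toJordanDecomposition.posPart
    - ∫ x, f x ∂ν.toJordanDecomposition.negPart

/-- The interaction energy `∬ F(ρ(x,y)) dν(x) dν(y)` of a finite signed
measure `ν`. -/
noncomputable def signedEnergy {Ω : Type*} {m : MeasurableSpace Ω}
    (F : ℝ → ℝ) (ρ : Ω → Ω → ℝ) (ν : SignedMeasure Ω) : ℝ :=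
  sintegral ν (fun x => sintegral ν (fun y => F (ρ x y)))

/-- The Wasserstein `d_∞` distance: infimum over couplings `π` of `μ` and `ν`
of the supremum of `ρ(x,y)` over the support of `π`. -/
noncomputable def dInfty {Ω : Type*} [TopologicalSpace Ω] {m : MeasurableSpace Ω}
    (ρ : Ω → Ω → ℝ) (μ ν : Measure Ω) : ℝ≥0∞ :=
  ⨅ (π : Measure (Ω × Ω)) (_ : π.map Prod.fst = μ ∧ π.map Prod.snd = ν),
    ⨆ (p : Ω × Ω) (_ : p ∈ msupp π), ENNReal.ofReal (ρ p.1 p.2)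


/-!
For `v ∈ 𝒱₀`, minimality of `μ̃` against `μ̃ ± v` reads
`I(μ̃) ≤ I(μ̃) ± (B(μ̃, v) + B(v, μ̃)) + I(v)`, where `B` is the bilinear energy form; adding the two
inequalities gives `I(v) ≥ 0`, hence `I(λ v) = λ² I(v) ≥ 0`.

The energy is not weak-* continuous in general, but here it is along `λₙ νₙ → ν`: by
Banach–Steinhaus the integration functionals of `λₙ νₙ` on `C(Ω)` are uniformly bounded, hence
equicontinuous, so on the compact set of kernel slices `y ↦ F(ρ(x, y))` they converge uniformly.
Thus the potentials of `λₙ νₙ` converge uniformly to that of `ν`, and integrating them against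
`λₙ νₙ` (uniformly bounded again) gives `I(λₙ νₙ) → I(ν)`.
-/

open BoundedContinuousFunction

theorem LinearMap.BilinForm.apply_self_nonneg_of_le_add_of_le_sub {R M : Type*} [Field R]
    [LinearOrder R] [IsStrictOrderedRing R] [AddCommGroup M] [Module R M]
    (B : LinearMap.BilinForm R M) {a v : M} (hadd : B a a ≤ B (a + v) (a + v))
    (hsub : B a a ≤ B (a - v) (a - v)) : 0 ≤ B v v := by
  simp only [map_add, map_sub, LinearMap.add_apply, LinearMap.sub_apply] at hadd hsub
  linarith

section UniformBoundedness

variable {𝕜 E F : Type*} [NontriviallyNormedField 𝕜] [NormedAddCommGroup E] [NormedSpace 𝕜 E]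
  [CompleteSpace E] [NormedAddCommGroup F] [NormedSpace 𝕜 F]
  {T : ℕ → E →L[𝕜] F} {T₀ : E →L[𝕜] F}

theorem ContinuousLinearMap.tendstoUniformly_comp_of_tendsto {X : Type*} [TopologicalSpace X]
    [CompactSpace X] (hT : ∀ f, Tendsto (fun n => T n f) atTop (𝓝 (T₀ f)))
    {k : X → E} (hk : Continuous k) :
    TendstoUniformly (fun n x => T n (k x)) (fun x => T₀ (k x)) atTop := by
  have hbdd : ∃ C, ∀ n, ‖T n‖ ≤ C := banach_steinhaus fun f => by
    obtain ⟨C, hC⟩ := (hT f).norm.bddAbove_range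
    exact ⟨C, fun n => hC (Set.mem_range_self n)⟩
  have hequi : Equicontinuous fun n => ⇑(T n) :=
    ((NormedSpace.equicontinuous_TFAE T).out 5 1).mp hbdd
  have hequi_k : Equicontinuous fun n => ⇑(T n) ∘ k :=
    equicontinuous_iff_continuous.mpr ((equicontinuous_iff_continuous.mp hequi).comp hk)
  exact UniformFun.tendsto_iff_tendstoUniformly.mp
    ((hequi_k.tendsto_uniformFun_iff_pi _ _).mpr (tendsto_pi_nhds.mpr fun x => hT (k x)))

theorem ContinuousLinearMap.tendsto_apply_of_tendsto
    (hT : ∀ f, Tendsto (fun n => T n f) atTop (𝓝 (T₀ f)))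
    {g : ℕ → E} {g₀ : E} (hg : Tendsto g atTop (𝓝 g₀)) :
    Tendsto (fun n => T n (g n)) atTop (𝓝 (T₀ g₀)) := by
  let S : Set E := insert g₀ (Set.range g)
  have : CompactSpace S := isCompact_iff_compactSpace.mp hg.isCompact_insert_range
  have hunif : TendstoUniformlyOn (fun n => ⇑(T n)) T₀ atTop S :=
    tendstoUniformlyOn_iff_tendstoUniformly_comp_coe.mpr
      (tendstoUniformly_comp_of_tendsto hT continuous_subtype_val)
  exact hunif.tendsto_comp T₀.continuous.continuousWithinAt
    (tendsto_nhdsWithin_iff.mpr ⟨hg, .of_forall fun n => Or.inr (Set.mem_range_self n)⟩)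

end UniformBoundedness

namespace MeasureTheory

variable {Ω : Type*} [TopologicalSpace Ω] [MeasurableSpace Ω] [BorelSpace Ω]

noncomputable def Measure.integralBCF (μ : Measure Ω) [IsFiniteMeasure μ] :
    StrongDual ℝ (Ω →ᵇ ℝ) :=
  L1.integralCLM.comp (toLp 1 μ ℝ)

theorem Measure.integralBCF_apply (μ : Measure Ω) [IsFiniteMeasure μ] (f : Ω →ᵇ ℝ) :
    μ.integralBCF f = ∫ x, f x ∂μ := by
  rw [integralBCF, ContinuousLinearMap.comp_apply, ← L1.integral_eq, L1.integral_eq_integral]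
  exact integral_congr_ae (coeFn_toLp 1 μ ℝ f)

theorem Measure.integralBCF_add (μ μ' : Measure Ω) [IsFiniteMeasure μ] [IsFiniteMeasure μ'] :
    (μ + μ').integralBCF = μ.integralBCF + μ'.integralBCF := by
  ext f
  simp only [FunLike.coe_add, Pi.add_apply, integralBCF_apply]
  exact integral_add_measure (f.integrable μ) (f.integrable μ')

theorem Measure.integralBCF_smul (c : ℝ≥0) (μ : Measure Ω) [IsFiniteMeasure μ] :
    (c • μ).integralBCF = (c : ℝ) • μ.integralBCF := by
  ext f
  simp only [_root_.smul_apply, integralBCF_apply, integral_smul_nnreal_measure,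
    NNReal.smul_def]

namespace SignedMeasure

noncomputable def integralBCF (ν : SignedMeasure Ω) : StrongDual ℝ (Ω →ᵇ ℝ) :=
  ν.toJordanDecomposition.posPart.integralBCF - ν.toJordanDecomposition.negPart.integralBCF

theorem integralBCF_apply (ν : SignedMeasure Ω) (f : Ω →ᵇ ℝ) :
    ν.integralBCF f = sintegral ν (fun x => f x) := by
  simp only [integralBCF, _root_.sub_apply, Measure.integralBCF_apply, sintegral]

theorem integralBCF_eq_sub {ν : SignedMeasure Ω} {P N : Measure Ω} [IsFiniteMeasure P]
    [IsFiniteMeasure N] (h : ν = P.toSignedMeasure - N.toSignedMeasure) :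
    ν.integralBCF = P.integralBCF - N.integralBCF := by
  set J := ν.toJordanDecomposition
  have hJ : J.posPart + N = P + J.negPart := by
    rw [← Measure.toSignedMeasure_eq_toSignedMeasure_iff, Measure.toSignedMeasure_add,
      Measure.toSignedMeasure_add, ← sub_eq_sub_iff_add_eq_add, ← h]
    exact ν.toSignedMeasure_toJordanDecomposition
  have hint : (J.posPart + N).integralBCF = (P + J.negPart).integralBCF := by
    ext f
    simp only [Measure.integralBCF_apply, hJ]
  rw [Measure.integralBCF_add, Measure.integralBCF_add] at hint
  exact (sub_eq_sub_iff_add_eq_add (G := StrongDual ℝ (Ω →ᵇ ℝ))).mpr hint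

noncomputable def integralBCFₗ : SignedMeasure Ω →ₗ[ℝ] StrongDual ℝ (Ω →ᵇ ℝ) where
  toFun := integralBCF
  map_add' s t := by
    rw [integralBCF_eq_sub (P := s.toJordanDecomposition.posPart + t.toJordanDecomposition.posPart)
      (N := s.toJordanDecomposition.negPart + t.toJordanDecomposition.negPart),
      Measure.integralBCF_add, Measure.integralBCF_add, integralBCF, integralBCF]
    · abel
    · rw [Measure.toSignedMeasure_add, Measure.toSignedMeasure_add]
      conv_lhs => rw [← s.toSignedMeasure_toJordanDecomposition,
        ← t.toSignedMeasure_toJordanDecomposition]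
      simp only [JordanDecomposition.toSignedMeasure]
      abel
  map_smul' r s := by
    simp only [integralBCF, toJordanDecomposition_smul_real, RingHom.id_apply]
    rcases le_or_gt 0 r with hr | hr
    · simp only [JordanDecomposition.real_smul_posPart_nonneg _ _ hr,
        JordanDecomposition.real_smul_negPart_nonneg _ _ hr, Measure.integralBCF_smul,
        Real.coe_toNNReal r hr]
      module
    · simp only [JordanDecomposition.real_smul_posPart_neg _ _ hr,
        JordanDecomposition.real_smul_negPart_neg _ _ hr, Measure.integralBCF_smul,
        Real.coe_toNNReal _ (neg_nonneg.mpr hr.le)]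
      module

end SignedMeasure

end MeasureTheory

section Potential

variable {X E : Type*} [TopologicalSpace X] [CompactSpace X] [NormedAddCommGroup E]
  [NormedSpace ℝ E]

/-- With `T` integration against `ν` and `k` the slices of a kernel `K`, this is the potential
`x ↦ ∫ K(x, y) dν(y)`. -/
noncomputable def potential (k : C(X, E)) : StrongDual ℝ E →ₗ[ℝ] (X →ᵇ ℝ) where
  toFun T := mkOfCompact ⟨fun x => T (k x), by fun_prop⟩
  map_add' _ _ := rfl
  map_smul' _ _ := rfl

theorem potential_apply (k : C(X, E)) (T : StrongDual ℝ E) (x : X) :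
    potential k T x = T (k x) := rfl

theorem tendsto_potential [CompleteSpace E] {T : ℕ → StrongDual ℝ E} {T₀ : StrongDual ℝ E}
    (hT : ∀ f, Tendsto (fun n => T n f) atTop (𝓝 (T₀ f))) (k : C(X, E)) :
    Tendsto (fun n => potential k (T n)) atTop (𝓝 (potential k T₀)) :=
  BoundedContinuousFunction.tendsto_iff_tendstoUniformly.mpr
    (ContinuousLinearMap.tendstoUniformly_comp_of_tendsto hT k.continuous)

end Potential

noncomputable def ContinuousMap.curryBCF {X Y : Type*} [TopologicalSpace X] [TopologicalSpace Y]
    [CompactSpace Y] (K : C(X × Y, ℝ)) : C(X, Y →ᵇ ℝ) :=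
  ⟨fun x => mkOfCompact (K.curry x),
    (ContinuousMap.isometryEquivBoundedOfCompact Y ℝ).continuous.comp K.curry.continuous⟩

namespace MeasureTheory.SignedMeasure

variable {Ω : Type*} [TopologicalSpace Ω] [CompactSpace Ω] [MeasurableSpace Ω] [BorelSpace Ω]

noncomputable def energyForm (K : C(Ω × Ω, ℝ)) : LinearMap.BilinForm ℝ (SignedMeasure Ω) :=
  ((ContinuousLinearMap.coeLM ℝ).comp integralBCFₗ).compl₂
    ((potential K.curryBCF).comp integralBCFₗ)

theorem energyForm_apply (K : C(Ω × Ω, ℝ)) (s t : SignedMeasure Ω) :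
    energyForm K s t = s.integralBCF (potential K.curryBCF t.integralBCF) := rfl

theorem energyForm_self (K : C(Ω × Ω, ℝ)) (ν : SignedMeasure Ω) :
    energyForm K ν ν = sintegral ν (fun x => sintegral ν (fun y => K (x, y))) := by
  simp only [energyForm_apply, integralBCF_apply, potential_apply]
  rfl

theorem tendsto_energyForm_self (K : C(Ω × Ω, ℝ)) {s : ℕ → SignedMeasure Ω}
    {s₀ : SignedMeasure Ω}
    (hs : ∀ f : Ω →ᵇ ℝ, Tendsto (fun n => (s n).integralBCF f) atTop (𝓝 (s₀.integralBCF f))) :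
    Tendsto (fun n => energyForm K (s n) (s n)) atTop (𝓝 (energyForm K s₀ s₀)) :=
  ContinuousLinearMap.tendsto_apply_of_tendsto hs (tendsto_potential hs _)

end MeasureTheory.SignedMeasure

theorem stmt_1_general {Ω : Type*} [MetricSpace Ω] [CompactSpace Ω]
    [MeasurableSpace Ω] [BorelSpace Ω]
    (F : ℝ → ℝ) (hF_cont : ContinuousOn F (Set.Ici 0))
    (V0 : Set (SignedMeasure Ω))
    (hV0_symm : ∀ ν ∈ V0, -ν ∈ V0)
    (μt : Measure Ω) [IsProbabilityMeasure μt]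
    (hmin : ∀ ν ∈ V0,
      signedEnergy F dist μt.toSignedMeasure ≤
        signedEnergy F dist (μt.toSignedMeasure + ν))
    (ν : SignedMeasure Ω) (lam : ℕ → ℝ) (νs : ℕ → SignedMeasure Ω)
    (hνs : ∀ n, νs n ∈ V0)
    (hlim : ∀ f : BoundedContinuousFunction Ω ℝ,
      Tendsto (fun n => sintegral (lam n • νs n) (fun x => f x)) atTop
        (𝓝 (sintegral ν (fun x => f x)))) :
    0 ≤ signedEnergy F dist ν := by
  let K : C(Ω × Ω, ℝ) :=
    ⟨fun p => F (dist p.1 p.2), hF_cont.comp_continuous continuous_dist fun _ => dist_nonneg⟩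
  have hE (s : SignedMeasure Ω) : signedEnergy F dist s = SignedMeasure.energyForm K s s :=
    (SignedMeasure.energyForm_self K s).symm
  have hV0 (v : SignedMeasure Ω) (hv : v ∈ V0) : 0 ≤ SignedMeasure.energyForm K v v := by
    have hplus := hmin v hv
    have hminus := hmin (-v) (hV0_symm v hv)
    rw [hE, hE] at hplus hminus
    rw [← sub_eq_add_neg] at hminus
    exact (SignedMeasure.energyForm K).apply_self_nonneg_of_le_add_of_le_sub hplus hminus
  have hscaled (n : ℕ) : 0 ≤ SignedMeasure.energyForm K (lam n • νs n) (lam n • νs n) := by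
    rw [map_smul, map_smul, LinearMap.smul_apply, smul_eq_mul, smul_eq_mul, ← mul_assoc]
    exact mul_nonneg (mul_self_nonneg _) (hV0 _ (hνs n))
  have hconv : ∀ f : Ω →ᵇ ℝ,
      Tendsto (fun n => (lam n • νs n).integralBCF f) atTop (𝓝 (ν.integralBCF f)) := fun f => by
    simpa only [SignedMeasure.integralBCF_apply] using hlim f
  rw [hE]
  exact ge_of_tendsto' (SignedMeasure.tendsto_energyForm_self K hconv) hscaled

/-- Lemma on second-order conditions, weak-* closure.
If `μ̃` minimizes `I_F` over `μ̃ + 𝒱₀` as before, and a finite signed Borel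
measure `ν` is the weak-* limit of a sequence `λ_n ν_n` with `λ_n ∈ ℝ` and
`ν_n ∈ 𝒱₀`, then `∬ F(ρ(x,y)) dν(x) dν(y) ≥ 0`. -/
theorem stmt_1 {Ω : Type*} [MetricSpace Ω] [CompactSpace Ω]
    [MeasurableSpace Ω] [BorelSpace Ω]
    (F : ℝ → ℝ) (hF_cont : ContinuousOn F (Set.Ici 0))
    (hF_nonneg : ∀ t ∈ Set.Ici (0 : ℝ), 0 ≤ F t)
    (V0 : Set (SignedMeasure Ω))
    (hV0_symm : ∀ ν ∈ V0, -ν ∈ V0)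
    (hV0_zero : ∀ ν ∈ V0, ν Set.univ = 0)
    (μt : Measure Ω) [IsProbabilityMeasure μt]
    (hV0_prob : ∀ ν ∈ V0, 0 ≤ μt.toSignedMeasure + ν)
    (hmin : ∀ ν ∈ V0,
      signedEnergy F dist μt.toSignedMeasure ≤
        signedEnergy F dist (μt.toSignedMeasure + ν))
    (ν : SignedMeasure Ω) (lam : ℕ → ℝ) (νs : ℕ → SignedMeasure Ω)
    (hνs : ∀ n, νs n ∈ V0)
    (hlim : ∀ f : BoundedContinuousFunction Ω ℝ,
      Tendsto (fun n => sintegral (lam n • νs n) (fun x => f x)) atTop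
        (𝓝 (sintegral ν (fun x => f x)))) :
    0 ≤ signedEnergy F dist ν :=
  stmt_1_general F hF_cont V0 hV0_symm μt hmin ν lam νs hνs hlim
end

section
/- Let Ω be a compact metric space with distance ρ and let F : [0,∞) → [0,∞) be continuous. Suppose μ₁ ∈ 𝒫(Ω) is a local minimizer of I_F in the weak-* topology, and μ₂ ∈ 𝒫(Ω) is such that the potential x ↦ ∫_Ω F(ρ(x,y)) dμ₂(y) equals I_F(μ₂) at every point of supp μ₂ and supp μ₁ ⊆ supp μ₂. Then I_F(μ₁) ≤ I_F(μ₂). -/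
open MeasureTheory Topology Filter
open scoped ENNReal NNReal

lemma measure_compl_msupp {Ω : Type*} [TopologicalSpace Ω]
    [SecondCountableTopology Ω]
    {m : MeasurableSpace Ω} (μ : Measure Ω) : μ (msupp μ)ᶜ = 0 := by
  have hset : (msupp μ)ᶜ ⊆ ⋃₀ {U | IsOpen U ∧ μ U = 0} := by
    intro x hx
    simp only [msupp, Set.mem_compl_iff, Set.mem_setOf_eq, not_forall] at hx
    obtain ⟨U, hU, hxU, h0⟩ := hx
    exact ⟨U, ⟨hU, not_not.mp h0⟩, hxU⟩
  obtain ⟨T, hTc, hTsub, hTU⟩ :=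
    TopologicalSpace.isOpen_sUnion_countable {U | IsOpen U ∧ μ U = 0} (fun s hs => hs.1)
  refine measure_mono_null hset ?_
  rw [← hTU]
  exact (measure_sUnion_null_iff hTc).mpr (fun s hs => (hTsub hs).2)


/-- comparison along the segment between measures.
If `μ₁` is a local weak-* minimizer of `I_F`, and `μ₂` is such that the
potential `x ↦ ∫ F(ρ(x,y)) dμ₂(y)` equals `I_F(μ₂)` on `supp μ₂` and
`supp μ₁ ⊆ supp μ₂`, then `I_F(μ₁) ≤ I_F(μ₂)`. -/
theorem stmt_7 {Ω : Type*} [MetricSpace Ω] [CompactSpace Ω]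
    [MeasurableSpace Ω] [BorelSpace Ω]
    (F : ℝ → ℝ) (hF_cont : ContinuousOn F (Set.Ici 0))
    (hF_nonneg : ∀ t ∈ Set.Ici (0 : ℝ), 0 ≤ F t)
    (μ₁ μ₂ : ProbabilityMeasure Ω)
    (hmin₁ : ∃ U ∈ 𝓝 μ₁, ∀ μ ∈ U,
      energy F dist (μ₁ : Measure Ω) ≤ energy F dist (μ : Measure Ω))
    (hpot : ∀ x ∈ msupp (μ₂ : Measure Ω),
      ∫ y, F (dist x y) ∂(μ₂ : Measure Ω) = energy F dist (μ₂ : Measure Ω))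
    (hsupp : msupp (μ₁ : Measure Ω) ⊆ msupp (μ₂ : Measure Ω)) :
    energy F dist (μ₁ : Measure Ω) ≤ energy F dist (μ₂ : Measure Ω) := by
  obtain ⟨U, hU, hUmin⟩ := hmin₁
  set A := energy F dist (μ₁ : Measure Ω) with hA
  set B := energy F dist (μ₂ : Measure Ω) with hB
  -- continuity of the kernel
  have hg : Continuous fun p : Ω × Ω => F (dist p.1 p.2) :=
    hF_cont.comp_continuous continuous_dist (fun p => dist_nonneg)
  have hgx : ∀ x : Ω, Continuous fun y => F (dist x y) := fun x =>
    hg.comp (Continuous.prodMk_right x)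
  -- integrability of continuous functions
  have integ : ∀ (μ : Measure Ω), IsFiniteMeasure μ → ∀ (f : Ω → ℝ), Continuous f →
      Integrable f μ := by
    intro μ hμ f hf
    haveI := hμ
    exact hf.integrable_of_hasCompactSupport ((isClosed_tsupport f).isCompact)
  -- uniform bound on the kernel
  set G : BoundedContinuousFunction (Ω × Ω) ℝ :=
    BoundedContinuousFunction.mkOfCompact ⟨fun p => F (dist p.1 p.2), hg⟩ with hG
  have hM : ∀ p : Ω × Ω, ‖F (dist p.1 p.2)‖ ≤ ‖G‖ := fun p => G.norm_coe_le_norm p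
  -- continuity of potentials
  have hQ : ∀ (μ : Measure Ω), IsFiniteMeasure μ →
      Continuous fun x => ∫ y, F (dist x y) ∂μ := by
    intro μ hμ
    haveI := hμ
    apply continuous_of_dominated (bound := fun _ => ‖G‖)
    · exact fun x => (hgx x).aestronglyMeasurable
    · exact fun x => Filter.Eventually.of_forall (fun y => hM (x, y))
    · exact integrable_const _
    · exact Filter.Eventually.of_forall
        (fun y => hg.comp (continuous_id.prodMk continuous_const))
  -- the potential of μ₂ integrates against μ₁ to B
  have haeP : ∀ᵐ x ∂(μ₁ : Measure Ω), (∫ y, F (dist x y) ∂(μ₂ : Measure Ω)) = B := by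
    rw [ae_iff]
    refine measure_mono_null ?_ (measure_compl_msupp (μ₁ : Measure Ω))
    intro x hx
    simp only [Set.mem_setOf_eq] at hx
    exact fun hxs => hx (hpot x (hsupp hxs))
  have hPint : ∫ x, (∫ y, F (dist x y) ∂(μ₂:Measure Ω)) ∂(μ₁:Measure Ω) = B := by
    rw [integral_congr_ae haeP]
    simp
  -- the symmetric cross term
  have hgi : Integrable (fun p : Ω × Ω => F (dist p.1 p.2))
      (((μ₂:Measure Ω)).prod (μ₁:Measure Ω)) :=
    hg.integrable_of_hasCompactSupport ((isClosed_tsupport _).isCompact)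
  have hcross : ∫ x, (∫ y, F (dist x y) ∂(μ₁:Measure Ω)) ∂(μ₂:Measure Ω) = B := by
    rw [MeasureTheory.integral_integral_swap hgi]
    have hfl : (fun y => ∫ x, F (dist x y) ∂(μ₂:Measure Ω))
        = (fun y => ∫ x, F (dist y x) ∂(μ₂:Measure Ω)) :=
      funext fun y => integral_congr_ae
        (Filter.Eventually.of_forall fun x => by simp [dist_comm])
    rw [hfl]
    exact hPint
  -- the mixture measures
  set ν : ℝ≥0 → Measure Ω := fun t =>
    ((1 - t : ℝ≥0) : ℝ≥0∞) • (μ₁ : Measure Ω) + (t : ℝ≥0∞) • (μ₂ : Measure Ω) with hν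
  have hprob : ∀ t : ℝ≥0, t ≤ 1 → IsProbabilityMeasure (ν t) := by
    intro t ht
    constructor
    simp only [hν, Measure.coe_add, Measure.coe_smul, Pi.add_apply, Pi.smul_apply,
      smul_eq_mul, measure_univ, mul_one]
    rw [← ENNReal.coe_add, tsub_add_cancel_of_le ht, ENNReal.coe_one]
  -- integrals against the mixtures
  have hIν : ∀ (t : ℝ≥0), t ≤ 1 → ∀ (f : Ω → ℝ), Continuous f →
      ∫ x, f x ∂(ν t) = (1 - (t:ℝ)) * ∫ x, f x ∂(μ₁:Measure Ω)
        + (t:ℝ) * ∫ x, f x ∂(μ₂:Measure Ω) := by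
    intro t ht f hf
    have h1 : Integrable f (((1 - t : ℝ≥0) : ℝ≥0∞) • (μ₁ : Measure Ω)) :=
      (integ _ inferInstance f hf).smul_measure ENNReal.coe_ne_top
    have h2 : Integrable f ((t : ℝ≥0∞) • (μ₂ : Measure Ω)) :=
      (integ _ inferInstance f hf).smul_measure ENNReal.coe_ne_top
    rw [hν]
    rw [integral_add_measure h1 h2, integral_smul_measure, integral_smul_measure]
    rw [ENNReal.coe_toReal, ENNReal.coe_toReal, NNReal.coe_sub ht, NNReal.coe_one,
      smul_eq_mul, smul_eq_mul]
  -- energy of the mixtures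
  have hE : ∀ t : ℝ≥0, t ≤ 1 → energy F dist (ν t) =
      (1 - (t:ℝ))^2 * A + (1-(t:ℝ))*(t:ℝ)*B + (t:ℝ)*(1-(t:ℝ))*B + (t:ℝ)^2*B := by
    intro t ht
    have hQ1 : Continuous fun x => ∫ y, F (dist x y) ∂(μ₁:Measure Ω) := hQ _ inferInstance
    have hQ2 : Continuous fun x => ∫ y, F (dist x y) ∂(μ₂:Measure Ω) := hQ _ inferInstance
    have hinner : (fun x => ∫ y, F (dist x y) ∂(ν t)) = fun x =>
        (1 - (t:ℝ)) * ∫ y, F (dist x y) ∂(μ₁:Measure Ω)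
          + (t:ℝ) * ∫ y, F (dist x y) ∂(μ₂:Measure Ω) :=
      funext fun x => hIν t ht _ (hgx x)
    have houter : Continuous fun x =>
        (1 - (t:ℝ)) * ∫ y, F (dist x y) ∂(μ₁:Measure Ω)
          + (t:ℝ) * ∫ y, F (dist x y) ∂(μ₂:Measure Ω) :=
      (continuous_const.mul hQ1).add (continuous_const.mul hQ2)
    have expand : ∀ (μ : Measure Ω), IsFiniteMeasure μ →
        ∫ x, ((1 - (t:ℝ)) * ∫ y, F (dist x y) ∂(μ₁:Measure Ω)
          + (t:ℝ) * ∫ y, F (dist x y) ∂(μ₂:Measure Ω)) ∂μ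
        = (1 - (t:ℝ)) * (∫ x, (∫ y, F (dist x y) ∂(μ₁:Measure Ω)) ∂μ)
          + (t:ℝ) * (∫ x, (∫ y, F (dist x y) ∂(μ₂:Measure Ω)) ∂μ) := by
      intro μ hμ
      haveI := hμ
      rw [integral_add ((integ _ hμ _ hQ1).const_mul _) ((integ _ hμ _ hQ2).const_mul _),
        integral_const_mul, integral_const_mul]
    have hA' : ∫ x, (∫ y, F (dist x y) ∂(μ₁:Measure Ω)) ∂(μ₁:Measure Ω) = A := rfl
    have hB' : ∫ x, (∫ y, F (dist x y) ∂(μ₂:Measure Ω)) ∂(μ₂:Measure Ω) = B := rfl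
    show (∫ x, ∫ y, F (dist x y) ∂(ν t) ∂(ν t)) = _
    rw [hinner, hIν t ht _ houter, expand _ inferInstance, expand _ inferInstance,
      hA', hB', hPint, hcross]
    ring
  -- the approximating sequence
  set u : ℕ → ℝ≥0 := fun n => ((n:ℝ≥0)+1)⁻¹ with hu
  have hle : ∀ n : ℕ, u n ≤ 1 := by
    intro n
    rw [hu]
    exact inv_le_one_of_one_le₀ le_add_self
  set pm : ℕ → ProbabilityMeasure Ω := fun n => ⟨ν (u n), hprob _ (hle n)⟩ with hpm
  have hs0 : Tendsto (fun n : ℕ => ((u n : ℝ))) atTop (𝓝 0) := by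
    have heq : (fun n : ℕ => ((u n : ℝ))) = fun n : ℕ => 1/((n:ℝ)+1) := by
      funext n
      rw [hu]
      push_cast
      rw [one_div]
    rw [heq]
    exact tendsto_one_div_add_atTop_nhds_zero_nat
  have htend : Tendsto pm atTop (𝓝 μ₁) := by
    rw [ProbabilityMeasure.tendsto_iff_forall_integral_tendsto]
    intro f
    have heach : ∀ n, ∫ ω, f ω ∂((pm n : ProbabilityMeasure Ω) : Measure Ω) =
        (1 - (u n:ℝ)) * ∫ ω, f ω ∂(μ₁:Measure Ω)
          + (u n:ℝ) * ∫ ω, f ω ∂(μ₂:Measure Ω) :=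
      fun n => hIν _ (hle n) _ f.continuous
    simp only [heach]
    have hlim : Tendsto (fun n : ℕ => (1 - (u n:ℝ)) * ∫ ω, f ω ∂(μ₁:Measure Ω)
        + (u n:ℝ) * ∫ ω, f ω ∂(μ₂:Measure Ω)) atTop
        (𝓝 ((1-0) * ∫ ω, f ω ∂(μ₁:Measure Ω) + 0 * ∫ ω, f ω ∂(μ₂:Measure Ω))) :=
      ((tendsto_const_nhds.sub hs0).mul tendsto_const_nhds).add (hs0.mul tendsto_const_nhds)
    simpa using hlim
  obtain ⟨n, hn⟩ := (htend.eventually_mem hU).exists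
  have hAle := hUmin _ hn
  have hcoe : ((pm n : ProbabilityMeasure Ω) : Measure Ω) = ν (u n) := rfl
  rw [hcoe, hE _ (hle n)] at hAle
  set s := ((u n : ℝ)) with hs
  have hs_pos : 0 < s := by
    have : (0:ℝ≥0) < u n := by
      rw [hu]
      positivity
    exact_mod_cast this
  have hs_le : s ≤ 1 := by exact_mod_cast hle n
  nlinarith [hAle, mul_pos hs_pos (show (0:ℝ) < 2 - s by linarith), sq_nonneg (1-s)]
end

section
/- Let 𝕊^d be the unit sphere in ℝ^{d+1} with geodesic distance ρ(x,y) = arccos⟨x,y⟩, and let δ > 1. Then for every Borel probability measure μ on 𝕊^d one has ∬_{𝕊^d} ρ(x,y)^δ dμ(x) dμ(y) ≤ π^δ / 2, and for every x ∈ 𝕊^d the measure μ = (δ_x + δ_{−x})/2 attains equality; i.e., the measures (δ_x + δ_{−x})/2 are maximizers of the geodesic energy ∬ ρ^δ dμ dμ over 𝒫(𝕊^d). -/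
/-!
Since `ρ ≤ π` and `δ ≥ 1`, `ρ ^ δ ≤ π ^ (δ - 1) ρ`, so it suffices that `∬ ρ dμ dμ ≤ π / 2`, i.e.
(as `arccos = π / 2 - arcsin`) that `∬ arcsin ⟨x, y⟩ dμ dμ ≥ 0`. The Taylor series of `arcsin` has
nonnegative coefficients, and every kernel `⟨x, y⟩ ^ n = ⟨x ^ ⊗n, y ^ ⊗n⟩` is positive definite:
`∬ ⟨x, y⟩ ^ n dμ dμ = ‖∫ x ^ ⊗n dμ‖² ≥ 0`. The series is integrated termwise at `c ⟨x, y⟩` for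
`c < 1`, and `c → 1` by dominated convergence. For `(δ_x + δ_{-x}) / 2`, half of the mass of
`μ ⊗ μ` sits on pairs at distance `π`.
-/

open MeasureTheory Topology Filter Real
open scoped ENNReal RealInnerProductSpace

noncomputable def invSqrtCoeff (n : ℕ) : ℝ := Ring.choose (1 / 2 + n - 1 : ℝ) n

lemma invSqrtCoeff_nonneg (n : ℕ) : 0 ≤ invSqrtCoeff n := by
  have h := Ring.factorial_nsmul_multichoose_eq_ascPochhammer (1 / 2 : ℝ) n
  rw [Polynomial.ascPochhammer_smeval_eq_eval, nsmul_eq_mul] at h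
  have hpos : 0 < (ascPochhammer ℝ n).eval (1 / 2 : ℝ) := ascPochhammer_pos n _ (by norm_num)
  rw [invSqrtCoeff, Ring.choose, show (1 / 2 + n - 1 : ℝ) - n + 1 = 1 / 2 by ring]
  have : (0:ℝ) < n.factorial := by exact_mod_cast n.factorial_pos
  nlinarith

lemma hasSum_invSqrtCoeff_mul_pow {x : ℝ} (hx : |x| < 1) :
    HasSum (fun n => invSqrtCoeff n * x ^ n) (√(1 - x))⁻¹ := by
  have h := (one_div_one_sub_rpow_hasFPowerSeriesOnBall_zero (1 / 2)).hasSum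
    (y := x) (by simpa [enorm_eq_nnnorm, ← NNReal.coe_lt_coe] using hx)
  simp only [FormalMultilinearSeries.ofScalars_apply_eq, smul_eq_mul, zero_add] at h
  rwa [Real.sqrt_eq_rpow, ← one_div]

lemma summable_arcsinSeries {s : ℝ} (hs : |s| < 1) :
    Summable fun n : ℕ => invSqrtCoeff n / (2 * n + 1) * s ^ (2 * n + 1) := by
  refine .of_norm_bounded (hasSum_invSqrtCoeff_mul_pow (x := s ^ 2) ?_).summable fun n => ?_
  · rwa [abs_pow, sq_lt_one_iff_abs_lt_one, abs_abs]
  · have h1 : (1 : ℝ) ≤ 2 * n + 1 := by linarith [n.cast_nonneg (α := ℝ)]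
    rw [norm_mul, norm_div, Real.norm_of_nonneg (invSqrtCoeff_nonneg n), norm_pow, ← pow_mul,
      Real.norm_eq_abs, abs_of_pos (by linarith : (0:ℝ) < 2 * n + 1), pow_succ]
    calc invSqrtCoeff n / (2 * n + 1) * (|s| ^ (2 * n) * |s|)
        ≤ invSqrtCoeff n / 1 * (|s| ^ (2 * n) * 1) := by
          have := invSqrtCoeff_nonneg n
          gcongr
      _ = invSqrtCoeff n * s ^ (2 * n) := by rw [div_one, mul_one, pow_mul, sq_abs, ← pow_mul]

lemma hasDerivAt_arcsinSeries {s : ℝ} (hs : |s| < 1) :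
    HasDerivAt (fun z => ∑' n : ℕ, invSqrtCoeff n / (2 * n + 1) * z ^ (2 * n + 1))
      (√(1 - s ^ 2))⁻¹ s := by
  obtain ⟨r, hsr, hr1⟩ := exists_between hs
  have hr0 : 0 < r := (abs_nonneg s).trans_lt hsr
  have hr : |r ^ 2| < 1 := by rw [abs_of_nonneg (sq_nonneg r)]; nlinarith
  have hsq : |s ^ 2| < 1 := by rwa [abs_pow, sq_lt_one_iff_abs_lt_one, abs_abs]
  have := hasDerivAt_tsum_of_isPreconnected (t := Metric.ball 0 r)
    (g := fun (n : ℕ) (z : ℝ) => invSqrtCoeff n / (2 * n + 1) * z ^ (2 * n + 1))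
    (g' := fun n z => invSqrtCoeff n * (z ^ 2) ^ n)
    (hasSum_invSqrtCoeff_mul_pow hr).summable
    Metric.isOpen_ball (convex_ball 0 r).isPreconnected ?_ ?_ (Metric.mem_ball_self ?_)
    (summable_arcsinSeries (s := 0) (by simp)) (y := s) ?_
  · rwa [(hasSum_invSqrtCoeff_mul_pow hsq).tsum_eq] at this
  · intro n y _
    refine ((hasDerivAt_pow (2 * n + 1) y).const_mul (invSqrtCoeff n / (2 * n + 1))).congr_deriv ?_
    rw [Nat.add_sub_cancel, ← pow_mul]
    push_cast
    field_simp
  · intro n y hy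
    rw [mem_ball_zero_iff, Real.norm_eq_abs] at hy
    rw [norm_mul, Real.norm_of_nonneg (invSqrtCoeff_nonneg n), norm_pow, Real.norm_eq_abs, abs_pow]
    have := invSqrtCoeff_nonneg n
    gcongr
  · exact hr0
  · rwa [mem_ball_zero_iff, Real.norm_eq_abs]

lemma hasSum_arcsin {s : ℝ} (hs : |s| < 1) :
    HasSum (fun n : ℕ => invSqrtCoeff n / (2 * n + 1) * s ^ (2 * n + 1)) (arcsin s) := by
  have hI : ∀ z ∈ Set.Ioo (-1 : ℝ) 1, |z| < 1 := fun z hz => abs_lt.2 hz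
  obtain ⟨a, ha⟩ := isOpen_Ioo.exists_eq_add_of_deriv_eq isPreconnected_Ioo
    (fun z hz => (hasDerivAt_arcsinSeries (hI z hz)).differentiableAt.differentiableWithinAt)
    (fun z hz => (differentiableAt_arcsin.2 ⟨hz.1.ne', hz.2.ne⟩).differentiableWithinAt)
    (fun z hz => by simp [Real.deriv_arcsin, (hasDerivAt_arcsinSeries (hI z hz)).deriv])
  have h0 : a = 0 := by simpa using (ha (x := 0) (by norm_num)).symm
  simpa [ha (abs_lt.1 hs), h0] using (summable_arcsinSeries hs).hasSum

section PowerSeriesKernel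

variable {X : Type*} [MeasurableSpace X] {μ : Measure X} [IsFiniteMeasure μ] {K : X → ℝ}
  {g : ℝ → ℝ} {b : ℕ → ℝ} {e : ℕ → ℕ}

lemma integral_comp_const_mul_nonneg_of_moment_nonneg (hK : AEStronglyMeasurable K μ)
    (hK1 : ∀ x, |K x| ≤ 1) (hmom : ∀ n, 0 ≤ ∫ x, K x ^ n ∂μ) (hb : ∀ n, 0 ≤ b n)
    (hsum : ∀ t, |t| < 1 → HasSum (fun n => b n * t ^ e n) (g t)) {c : ℝ} (hc0 : 0 ≤ c)
    (hc1 : c < 1) : 0 ≤ ∫ x, g (c * K x) ∂μ := by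
  have hcK : ∀ x, |c * K x| ≤ c := fun x => by
    rw [abs_mul, abs_of_nonneg hc0]; exact mul_le_of_le_one_right hc0 (hK1 x)
  have hterms := hasSum_integral_of_dominated_convergence (μ := μ)
    (F := fun n x => b n * (c * K x) ^ e n) (fun n _ => b n * c ^ e n)
    (fun n => ((hK.const_mul c).pow (e n)).const_mul (b n))
    (fun n => ae_of_all _ fun x => by
      rw [norm_mul, norm_pow, Real.norm_of_nonneg (hb n), Real.norm_eq_abs]
      gcongr
      · exact hb n
      · exact hcK x)
    (ae_of_all _ fun _ => (hsum c (by rwa [abs_of_nonneg hc0])).summable)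
    (integrable_const _)
    (ae_of_all _ fun x => hsum _ ((hcK x).trans_lt hc1))
  refine hterms.nonneg fun n => ?_
  simp_rw [mul_pow, ← mul_assoc]
  rw [integral_const_mul]
  exact mul_nonneg (mul_nonneg (hb n) (pow_nonneg hc0 _)) (hmom (e n))

lemma integral_comp_nonneg_of_moment_nonneg (hK : AEStronglyMeasurable K μ)
    (hK1 : ∀ x, |K x| ≤ 1) (hmom : ∀ n, 0 ≤ ∫ x, K x ^ n ∂μ) (hg : Continuous g)
    (hb : ∀ n, 0 ≤ b n) (hsum : ∀ t, |t| < 1 → HasSum (fun n => b n * t ^ e n) (g t)) :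
    0 ≤ ∫ x, g (K x) ∂μ := by
  obtain ⟨C, hC⟩ := (isCompact_Icc (a := -1) (b := 1)).exists_bound_of_continuousOn
    hg.continuousOn
  have hlim : Tendsto (fun c => ∫ x, g (c * K x) ∂μ) (𝓝[<] 1) (𝓝 (∫ x, g (K x) ∂μ)) := by
    refine tendsto_integral_filter_of_dominated_convergence (fun _ => C)
      (Eventually.of_forall fun c => hg.comp_aestronglyMeasurable (hK.const_mul c)) ?_
      (integrable_const C) (ae_of_all _ fun x => ?_)
    · filter_upwards [Ioo_mem_nhdsLT (show (0 : ℝ) < 1 by norm_num)] with c hc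
      refine ae_of_all _ fun x => hC _ (abs_le.1 ?_)
      rw [abs_mul, abs_of_pos hc.1]
      exact mul_le_one₀ hc.2.le (abs_nonneg _) (hK1 x)
    · have : Tendsto (fun c => c * K x) (𝓝[<] 1) (𝓝 (1 * K x)) :=
        (tendsto_nhdsWithin_of_tendsto_nhds tendsto_id).mul_const _
      rw [one_mul] at this
      exact (hg.tendsto _).comp this
  refine ge_of_tendsto hlim ?_
  filter_upwards [Ioo_mem_nhdsLT (show (0 : ℝ) < 1 by norm_num)] with c hc
  exact integral_comp_const_mul_nonneg_of_moment_nonneg hK hK1 hmom hb hsum hc.1.le hc.2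

end PowerSeriesKernel

lemma integral_integral_inner_nonneg {X E : Type*} [MeasurableSpace X] [NormedAddCommGroup E]
    [InnerProductSpace ℝ E] [CompleteSpace E] {μ : Measure X} {F : X → E} (hF : Integrable F μ) :
    0 ≤ ∫ x, ∫ y, ⟪F x, F y⟫ ∂μ ∂μ := by
  calc 0 ≤ ⟪∫ x, F x ∂μ, ∫ y, F y ∂μ⟫ := real_inner_self_nonneg
    _ = ∫ x, ⟪F x, ∫ y, F y ∂μ⟫ ∂μ := by
      rw [← integral_inner hF]
      exact integral_congr_ae (ae_of_all _ fun x => real_inner_comm _ _)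
    _ = ∫ x, ∫ y, ⟪F x, F y⟫ ∂μ ∂μ := by simp_rw [integral_inner hF]

namespace EuclideanSpace

variable {ι : Type*}

noncomputable def tensorPower (n : ℕ) (x : EuclideanSpace ℝ ι) : EuclideanSpace ℝ (Fin n → ι) :=
  WithLp.toLp 2 fun f => ∏ k, x (f k)

lemma inner_tensorPower [Fintype ι] (n : ℕ) (x y : EuclideanSpace ℝ ι) :
    ⟪tensorPower n x, tensorPower n y⟫ = ⟪x, y⟫ ^ n := by
  simp only [tensorPower, PiLp.inner_apply, RCLike.inner_apply, conj_trivial,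
    Finset.sum_pow', Fintype.piFinset_univ, Finset.prod_mul_distrib]

lemma norm_tensorPower [Fintype ι] (n : ℕ) (x : EuclideanSpace ℝ ι) :
    ‖tensorPower n x‖ = ‖x‖ ^ n := by
  rw [← sq_eq_sq₀ (norm_nonneg _) (by positivity), ← real_inner_self_eq_norm_sq,
    inner_tensorPower, real_inner_self_eq_norm_sq, ← pow_mul, ← pow_mul, mul_comm]

lemma continuous_tensorPower (n : ℕ) : Continuous (tensorPower (ι := ι) n) := by
  unfold tensorPower
  fun_prop

end EuclideanSpace

open EuclideanSpace in
lemma integral_inner_pow_nonneg {ι X : Type*} [Fintype ι] [MeasurableSpace X] {μ : Measure X}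
    [IsFiniteMeasure μ] {u : X → EuclideanSpace ℝ ι} (hu : Measurable u) (hu1 : ∀ x, ‖u x‖ ≤ 1)
    (n : ℕ) : 0 ≤ ∫ p, ⟪u p.1, u p.2⟫ ^ n ∂μ.prod μ := by
  have hT : Integrable (fun x => tensorPower n (u x)) μ :=
    .of_bound ((continuous_tensorPower n).measurable.comp hu).aestronglyMeasurable 1
      (ae_of_all _ fun x => by rw [norm_tensorPower]; exact pow_le_one₀ (norm_nonneg _) (hu1 x))
  have hK : Measurable fun p : X × X => ⟪u p.1, u p.2⟫ :=
    (hu.comp measurable_fst).inner (hu.comp measurable_snd)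
  have hKn : Integrable (fun p : X × X => ⟪u p.1, u p.2⟫ ^ n) (μ.prod μ) := by
    refine .of_bound (hK.pow_const n).aestronglyMeasurable 1 (ae_of_all _ fun p => ?_)
    rw [norm_pow, Real.norm_eq_abs]
    exact pow_le_one₀ (abs_nonneg _) ((abs_real_inner_le_norm _ _).trans
      (mul_le_one₀ (hu1 _) (norm_nonneg _) (hu1 _)))
  rw [integral_prod _ hKn]
  simp_rw [← inner_tensorPower]
  exact integral_integral_inner_nonneg hT

lemma integral_arcsin_inner_nonneg {ι X : Type*} [Fintype ι] [MeasurableSpace X] {μ : Measure X}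
    [IsFiniteMeasure μ] {u : X → EuclideanSpace ℝ ι} (hu : Measurable u) (hu1 : ∀ x, ‖u x‖ ≤ 1) :
    0 ≤ ∫ p, arcsin ⟪u p.1, u p.2⟫ ∂μ.prod μ :=
  integral_comp_nonneg_of_moment_nonneg
    ((hu.comp measurable_fst).inner (hu.comp measurable_snd)).aestronglyMeasurable
    (fun p => (abs_real_inner_le_norm _ _).trans (mul_le_one₀ (hu1 _) (norm_nonneg _) (hu1 _)))
    (integral_inner_pow_nonneg hu hu1) continuous_arcsin
    (fun n => div_nonneg (invSqrtCoeff_nonneg n) (by positivity)) fun _ => hasSum_arcsin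

lemma rpow_le_rpow_sub_one_mul {a b δ : ℝ} (ha : 0 ≤ a) (hab : a ≤ b) (hδ : 1 ≤ δ) :
    a ^ δ ≤ b ^ (δ - 1) * a := by
  calc a ^ δ = a ^ (δ - 1) * a ^ (1 : ℝ) := by
        rw [← Real.rpow_add' ha (by linarith), sub_add_cancel]
    _ ≤ b ^ (δ - 1) * a := by
        rw [Real.rpow_one]
        gcongr

theorem integral_integral_arccos_inner_rpow_le {ι X : Type*} [Fintype ι] [MeasurableSpace X]
    {μ : Measure X} [IsProbabilityMeasure μ] {u : X → EuclideanSpace ℝ ι} (hu : Measurable u)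
    (hu1 : ∀ x, ‖u x‖ ≤ 1) {δ : ℝ} (hδ : 1 ≤ δ) :
    ∫ x, ∫ y, arccos ⟪u x, u y⟫ ^ δ ∂μ ∂μ ≤ π ^ δ / 2 := by
  have hK : Measurable fun p : X × X => ⟪u p.1, u p.2⟫ :=
    (hu.comp measurable_fst).inner (hu.comp measurable_snd)
  have hρ : Measurable fun p : X × X => arccos ⟪u p.1, u p.2⟫ :=
    continuous_arccos.measurable.comp hK
  have hint : Integrable (fun p : X × X => arccos ⟪u p.1, u p.2⟫ ^ δ) (μ.prod μ) :=
    .of_bound (hρ.pow_const δ).aestronglyMeasurable (π ^ δ) (ae_of_all _ fun p => by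
      rw [Real.norm_of_nonneg (Real.rpow_nonneg (arccos_nonneg _) δ)]
      exact Real.rpow_le_rpow (arccos_nonneg _) (arccos_le_pi _) (by linarith))
  have hint_arcsin : Integrable (fun p : X × X => arcsin ⟪u p.1, u p.2⟫) (μ.prod μ) :=
    .of_bound (continuous_arcsin.measurable.comp hK).aestronglyMeasurable (π / 2)
      (ae_of_all _ fun p => abs_le.2 ⟨neg_pi_div_two_le_arcsin _, arcsin_le_pi_div_two _⟩)
  rw [integral_integral hint]
  calc ∫ p, arccos ⟪u p.1, u p.2⟫ ^ δ ∂μ.prod μ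
      ≤ ∫ p, π ^ (δ - 1) * (π / 2 - arcsin ⟪u p.1, u p.2⟫) ∂μ.prod μ := by
        refine integral_mono hint ((integrable_const _).sub hint_arcsin |>.const_mul _) fun p => ?_
        rw [← arccos_eq_pi_div_two_sub_arcsin]
        exact rpow_le_rpow_sub_one_mul (arccos_nonneg _) (arccos_le_pi _) hδ
    _ = π ^ (δ - 1) * (π / 2 - ∫ p, arcsin ⟪u p.1, u p.2⟫ ∂μ.prod μ) := by
        rw [integral_const_mul, integral_sub (integrable_const _) hint_arcsin, integral_const,
          probReal_univ, one_smul]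
    _ ≤ π ^ (δ - 1) * (π / 2) := by
        gcongr
        linarith [integral_arcsin_inner_nonneg (μ := μ) hu hu1]
    _ = π ^ δ / 2 := by
        rw [mul_div_assoc', ← Real.rpow_add_one pi_ne_zero, sub_add_cancel]

lemma integral_half_smul_dirac_add_dirac {α : Type*} [MeasurableSpace α]
    [MeasurableSingletonClass α] (f : α → ℝ) (a b : α) :
    ∫ x, f x ∂((2 : ℝ≥0∞)⁻¹ • (Measure.dirac a + Measure.dirac b)) = (f a + f b) / 2 := by
  rw [integral_smul_measure, integral_add_measure (integrable_dirac enorm_lt_top)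
    (integrable_dirac enorm_lt_top), integral_dirac, integral_dirac, ENNReal.toReal_inv,
    ENNReal.toReal_ofNat, smul_eq_mul]
  ring

theorem integral_integral_arccos_inner_rpow_antipodal {E : Type*} [NormedAddCommGroup E]
    [InnerProductSpace ℝ E] [MeasurableSpace E] [MeasurableSingletonClass E] {δ : ℝ} (hδ : δ ≠ 0)
    (x : Metric.sphere (0 : E) 1) :
    ∫ a, ∫ b, arccos ⟪(a : E), (b : E)⟫ ^ δ
        ∂((2 : ℝ≥0∞)⁻¹ • (Measure.dirac x + Measure.dirac (-x)))
        ∂((2 : ℝ≥0∞)⁻¹ • (Measure.dirac x + Measure.dirac (-x))) = π ^ δ / 2 := by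
  have hx : ⟪(x : E), (x : E)⟫ = 1 := by
    rw [real_inner_self_eq_norm_sq, norm_eq_of_mem_sphere, one_pow]
  simp only [integral_half_smul_dirac_add_dirac, coe_neg_sphere, inner_neg_left,
    inner_neg_right, neg_neg, hx, arccos_one, arccos_neg_one, Real.zero_rpow hδ]
  ring

/-- maximizers of the geodesic energy on the sphere, `δ > 1`.
For `δ > 1` and every Borel probability measure `μ` on `𝕊^d`,
`∬ ρ(x,y)^δ dμ dμ ≤ π^δ/2`, and for every `x ∈ 𝕊^d` the measure
`(δ_x + δ_{−x})/2` attains equality. -/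
theorem stmt_14 (d : ℕ) (δ : ℝ) (hδ : 1 < δ) :
    (∀ μ : Measure ↥(Metric.sphere (0 : EuclideanSpace ℝ (Fin (d + 1))) 1),
      IsProbabilityMeasure μ →
      ∫ x, ∫ y, (Real.arccos ⟪(x : EuclideanSpace ℝ (Fin (d + 1))),
          (y : EuclideanSpace ℝ (Fin (d + 1)))⟫) ^ δ ∂μ ∂μ ≤ π ^ δ / 2) ∧
    (∀ x : ↥(Metric.sphere (0 : EuclideanSpace ℝ (Fin (d + 1))) 1),
      ∫ a, ∫ b, (Real.arccos ⟪(a : EuclideanSpace ℝ (Fin (d + 1))),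
          (b : EuclideanSpace ℝ (Fin (d + 1)))⟫) ^ δ
        ∂((2 : ℝ≥0∞)⁻¹ • (Measure.dirac x + Measure.dirac (-x)))
        ∂((2 : ℝ≥0∞)⁻¹ • (Measure.dirac x + Measure.dirac (-x))) = π ^ δ / 2) :=
  ⟨fun _ _ => integral_integral_arccos_inner_rpow_le measurable_subtype_coe
      (fun x => (norm_eq_of_mem_sphere x).le) hδ.le,
    integral_integral_arccos_inner_rpow_antipodal (by positivity)⟩
end
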